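/- arXiv:2007.12169 — 3 statements merged into one kernel-verified Lean document; each statement's English description precedes it below -/
import Mathlib

section
/- Let Q : {1,2,…} → ℕ be a sequence with Q_1 = 1, and for each n ≥ 2 let μ^n be a finite-support coefficient function with ord(μ^n) = n−1 such that Q_n = Q_1 + Σ_k μ^n_k Q_k. Let 𝓔 be the ascendingly-ordered collection determined by {μ^n : n ≥ 2}. Then the map ε ↦ Σ_k ε_k Q_k is a bijection from 𝓔 \ {0} onto the set of positive integers; in particular, Q has the unique 𝓔-representation property and X_Q = ℕ, i.e., Q is a fundamental sequence for the positive integers under the 𝓔-Zeckendorf condition. -/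
/-- The `i`-th basis coefficient function `β^i`. -/
def beta (i : ℕ) : ℕ → ℕ := fun k => if k = i then 1 else 0

/-- A coefficient function has finite support. -/
def FinSupp (ε : ℕ → ℕ) : Prop := (Function.support ε).Finite

/-- The ascending lexicographical order `μ <_a ν` on finite-support coefficient
functions: there is a (necessarily largest) index `k` with `μ k < ν k` and
`μ j = ν j` for all `j > k`. -/
def AscLt (μ ν : ℕ → ℕ) : Prop := ∃ k, μ k < ν k ∧ ∀ j, k < j → μ j = ν j

/-- An ascendingly-ordered collection of coefficient functions: a set of
finite-support coefficient functions on the indices `{1,2,...}` (so vanishing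
at the dummy index `0`) containing the zero function and every `β^i`. -/
def IsCollection (E : Set (ℕ → ℕ)) : Prop :=
  (∀ ε ∈ E, ε 0 = 0 ∧ FinSupp ε) ∧ (0 : ℕ → ℕ) ∈ E ∧ ∀ i, 1 ≤ i → beta i ∈ E

/-- `ν` is the immediate successor of `μ` in `E`. -/
def IsImmSucc (E : Set (ℕ → ℕ)) (μ ν : ℕ → ℕ) : Prop :=
  ν ∈ E ∧ AscLt μ ν ∧ ∀ σ ∈ E, AscLt μ σ → σ = ν ∨ AscLt ν σ

/-- `ν` is the immediate predecessor of `μ` in `E`. -/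
def IsImmPred (E : Set (ℕ → ℕ)) (μ ν : ℕ → ℕ) : Prop :=
  ν ∈ E ∧ AscLt ν μ ∧ ∀ σ ∈ E, AscLt σ μ → σ = ν ∨ AscLt σ ν

/-- A Zeckendorf collection for positive integers. -/
def IsZeckendorf (E : Set (ℕ → ℕ)) : Prop :=
  IsCollection E ∧
  (∀ μ ∈ E, {σ | σ ∈ E ∧ AscLt σ μ}.Finite) ∧
  ∀ μ ∈ E, ∃ ν, IsImmSucc E μ ν ∧
    ((ν = fun k => beta 1 k + μ k) ∨
      ∃ n, 2 ≤ n ∧ ∃ δ, IsImmPred E (beta n) δ ∧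
        (∀ j, 1 ≤ j → j < n → μ j = δ j) ∧
        (ν = fun k => beta n k + if n ≤ k then μ k else 0))

/-- `ζ` is a proper `d`-block at index `n` with support `[i, n]` (relative to a
family `d` playing the role of the immediate predecessors `β̂^{n+1}`):
either `ζ` is the zero function (a proper block at any index `n ≥ 1`, with
support `[n,n]`), or `1 ≤ i ≤ n`, `ζ i < d (n+1) i`, `ζ` agrees with `d (n+1)`
on the indices in `(i, n]`, and `ζ` vanishes outside `[i, n]`. -/
def IsProperBlockAt (d : ℕ → ℕ → ℕ) (ζ : ℕ → ℕ) (i n : ℕ) : Prop :=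
  ((∀ k, ζ k = 0) ∧ i = n ∧ 1 ≤ n) ∨
    (1 ≤ i ∧ i ≤ n ∧ ζ i < d (n + 1) i ∧
      (∀ j, i < j → j ≤ n → ζ j = d (n + 1) j) ∧
      ∀ s, s < i ∨ n < s → ζ s = 0)

/-- `ζ` is the maximal `d`-block at index `n` (with support `[1, n]`),
namely `ζ = d (n+1)`. -/
def IsMaxBlockAt (d : ℕ → ℕ → ℕ) (ζ : ℕ → ℕ) (n : ℕ) : Prop :=
  1 ≤ n ∧ ζ = d (n + 1)

/-- `μ = Σ_{m=1}^M ζ m` is a `d`-block decomposition: `ζ 1` is a `d`-block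
(proper or maximal) with support `[i 1, n 1]` where `i 1 = 1`, each `ζ m` with
`2 ≤ m ≤ M` is a proper `d`-block with support `[i m, n m]`, and the supports
are consecutive: `i (m+1) = n m + 1`. -/
def IsBlockDecomp (d : ℕ → ℕ → ℕ) (μ : ℕ → ℕ) (M : ℕ)
    (ζ : ℕ → ℕ → ℕ) (i n : ℕ → ℕ) : Prop :=
  1 ≤ M ∧ i 1 = 1 ∧
  (IsProperBlockAt d (ζ 1) (i 1) (n 1) ∨ IsMaxBlockAt d (ζ 1) (n 1)) ∧
  (∀ m, 2 ≤ m → m ≤ M → IsProperBlockAt d (ζ m) (i m) (n m)) ∧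
  (∀ m, 1 ≤ m → m < M → i (m + 1) = n m + 1) ∧
  ∀ k, μ k = ∑ m ∈ Finset.Icc 1 M, ζ m k

/-- The ascendingly-ordered collection determined by the family `d`, i.e. the
set of all sums of `d`-block decompositions. -/
def DeterminedCollection (d : ℕ → ℕ → ℕ) : Set (ℕ → ℕ) :=
  {μ | ∃ M ζ i n, IsBlockDecomp d μ M ζ i n}

/-!
Let `𝓔_n` be the elements of `𝓔` vanishing from index `n` on. For `N ≥ 1`, an element of
`𝓔_{N+1}` is either `μ^{N+1}` itself or has a pivot `i ≤ N`: it agrees with `μ^{N+1}` above `i`,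
is smaller at `i`, and its truncation below `i` is an arbitrary element of `𝓔_i`. Put
`T_a = Σ_{a ≤ k ≤ N} μ^{N+1}_k Q_k`. By induction on `n`, `ε ↦ Σ ε_k Q_k` maps `𝓔_n` bijectively
onto `[0, Q_n)`: the elements with pivot `i` fill exactly `[T_{i+1}, T_i)`, the coefficient at `i`
being the quotient and the truncation representing the remainder modulo `Q_i`, while `μ^{N+1}`
takes the last value `T_1 = Q_{N+1} - 1`.
-/

open Finset

def AscLtAt (ε d : ℕ → ℕ) (i : ℕ) : Prop := ε i < d i ∧ ∀ j, i < j → ε j = d j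

def truncBelow (i : ℕ) (ε : ℕ → ℕ) : ℕ → ℕ := fun k => if k < i then ε k else 0

noncomputable def weightedSum (Q ε : ℕ → ℕ) : ℕ := ∑ᶠ k, ε k * Q k

def collectionBelow (d : ℕ → ℕ → ℕ) (n : ℕ) : Set (ℕ → ℕ) :=
  {ε | ε ∈ DeterminedCollection d ∧ ∀ k, n ≤ k → ε k = 0}

/-- `BlockSum d ε t`: `ε` is a sum of consecutive `d`-blocks, the last one ending at index `t`
(`t = 0` for the empty sum). -/
inductive BlockSum (d : ℕ → ℕ → ℕ) : (ℕ → ℕ) → ℕ → Prop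
  | nil : BlockSum d 0 0
  | maximal {ζ : ℕ → ℕ} {n : ℕ} : IsMaxBlockAt d ζ n → BlockSum d ζ n
  | snoc {τ ζ : ℕ → ℕ} {n t : ℕ} : BlockSum d τ n → IsProperBlockAt d ζ (n + 1) t →
      BlockSum d (τ + ζ) t

section Decompositions

variable {d : ℕ → ℕ → ℕ}

lemma IsBlockDecomp.single {ζ : ℕ → ℕ} {n : ℕ}
    (h : IsProperBlockAt d ζ 1 n ∨ IsMaxBlockAt d ζ n) :
    IsBlockDecomp d ζ 1 (fun _ => ζ) (fun _ => 1) (fun _ => n) :=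
  ⟨le_rfl, rfl, h, fun _ _ _ => by omega, fun _ _ _ => by omega, fun k => by simp⟩

lemma IsBlockDecomp.snoc {τ B : ℕ → ℕ} {M t : ℕ} {ζ : ℕ → ℕ → ℕ} {i n : ℕ → ℕ}
    (hd : IsBlockDecomp d τ M ζ i n) (hB : IsProperBlockAt d B (n M + 1) t) :
    IsBlockDecomp d (τ + B) (M + 1) (Function.update ζ (M + 1) B)
      (Function.update i (M + 1) (n M + 1)) (Function.update n (M + 1) t) := by
  obtain ⟨hM, hi1, hfirst, hrest, hchain, hsum⟩ := hd
  have h1 : (1 : ℕ) ≠ M + 1 := by omega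
  refine ⟨by omega, ?_, ?_, fun m hm hmM => ?_, fun m hm hmM => ?_, fun k => ?_⟩
  · simpa [Function.update_of_ne h1] using hi1
  · simpa [Function.update_of_ne h1] using hfirst
  · rcases hmM.lt_or_eq with hmM | rfl
    · simpa [Function.update_of_ne hmM.ne] using hrest m hm (by omega)
    · simpa using hB
  · rcases (Nat.lt_succ_iff.mp hmM).lt_or_eq with hmM | rfl
    · simpa [Function.update_of_ne hmM.ne, Function.update_of_ne (show m + 1 ≠ M + 1 by omega),
        Function.update_of_ne (show m ≠ M + 1 by omega)] using hchain m hm hmM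
    · simp
  · rw [sum_Icc_succ_top (by omega), Pi.add_apply, hsum k, Function.update_self]
    congr 1
    refine sum_congr rfl fun m hm => ?_
    rw [Function.update_of_ne (by simp at hm; omega)]

lemma mem_determinedCollection_iff {ε : ℕ → ℕ} :
    ε ∈ DeterminedCollection d ↔ ∃ t, BlockSum d ε t := by
  constructor
  · rintro ⟨M, ζ, i, n, hM, hi1, hfirst, hrest, hchain, hsum⟩
    have partial_sums : ∀ m, 1 ≤ m → m ≤ M → BlockSum d (∑ l ∈ Icc 1 m, ζ l) (n m) := by
      intro m hm
      induction m, hm using Nat.le_induction with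
      | base =>
        intro _
        rcases hfirst with h | h
        · rw [hi1] at h
          simpa using BlockSum.snoc BlockSum.nil h
        · simpa using BlockSum.maximal h
      | succ m hm ih =>
        intro hmM
        rw [sum_Icc_succ_top (by omega)]
        exact .snoc (ih (by omega)) (hchain m hm (by omega) ▸ hrest (m + 1) (by omega) hmM)
    refine ⟨n M, ?_⟩
    convert partial_sums M hM le_rfl
    ext k
    rw [hsum k, Finset.sum_apply]
  · rintro ⟨t, h⟩
    have decomp : (t = 0 ∧ ε = 0) ∨ ∃ M ζ i n, IsBlockDecomp d ε M ζ i n ∧ n M = t := by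
      induction h with
      | nil => exact .inl ⟨rfl, rfl⟩
      | maximal h => exact .inr ⟨1, _, _, _, .single (.inr h), rfl⟩
      | snoc _ hζ ih =>
        rcases ih with ⟨rfl, rfl⟩ | ⟨M, ζ, i, n, hd, rfl⟩
        · exact .inr ⟨1, _, _, _, .single (.inl (by simpa using hζ)), rfl⟩
        · exact .inr ⟨M + 1, _, _, _, hd.snoc hζ, by simp⟩
    rcases decomp with ⟨-, rfl⟩ | ⟨M, ζ, i, n, hd, -⟩
    · exact ⟨1, _, _, _, .single (.inl (.inl ⟨fun _ => rfl, rfl, le_rfl⟩))⟩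
    · exact ⟨M, ζ, i, n, hd⟩

end Decompositions

section Collection

variable {μ : ℕ → ℕ → ℕ} (h0 : ∀ n, 1 ≤ n → μ (n + 1) 0 = 0)
  (hord : ∀ n, 1 ≤ n → μ (n + 1) n ≠ 0 ∧ ∀ k, n < k → μ (n + 1) k = 0)
include hord

lemma isProperBlockAt_iff {ζ : ℕ → ℕ} {i n : ℕ} (hi : 1 ≤ i) :
    IsProperBlockAt μ ζ i n ↔ i ≤ n ∧ AscLtAt ζ (μ (n + 1)) i ∧ ∀ s, s < i → ζ s = 0 := by
  constructor
  · rintro (⟨hz, rfl, -⟩ | ⟨-, hin, hlt, hagr, hout⟩)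
    · exact ⟨le_rfl, ⟨by simpa [hz] using Nat.pos_of_ne_zero (hord i hi).1,
        fun j hj => by rw [hz, (hord i hi).2 j hj]⟩, fun s _ => hz s⟩
    · refine ⟨hin, ⟨hlt, fun j hj => ?_⟩, fun s hs => hout s (.inl hs)⟩
      rcases le_or_gt j n with hjn | hjn
      · exact hagr j hj hjn
      · rw [hout j (.inr hjn), (hord n (by omega)).2 j hjn]
  · rintro ⟨hin, ⟨hlt, hagr⟩, hbelow⟩
    refine .inr ⟨hi, hin, hlt, fun j hj _ => hagr j hj, fun s hs => ?_⟩
    rcases hs with hs | hs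
    · exact hbelow s hs
    · rw [hagr s (by omega), (hord n (by omega)).2 s hs]

omit hord in
include h0 in
lemma BlockSum.apply_zero {ε : ℕ → ℕ} {t : ℕ} (h : BlockSum μ ε t) : ε 0 = 0 := by
  induction h with
  | nil => rfl
  | maximal h => rw [h.2, h0 _ h.1]
  | snoc _ hζ ih =>
    rcases hζ with ⟨hz, -⟩ | ⟨-, -, -, -, hout⟩
    · simp [ih, hz]
    · simp [ih, hout 0 (.inl (by omega))]

lemma BlockSum.apply_eq_zero_of_lt {ε : ℕ → ℕ} {t : ℕ} (h : BlockSum μ ε t) :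
    ∀ k, t < k → ε k = 0 := by
  induction h with
  | nil => exact fun _ _ => rfl
  | maximal h => rw [h.2]; exact (hord _ h.1).2
  | snoc _ hζ ih =>
    obtain ⟨hle, ⟨-, hagr⟩, -⟩ := (isProperBlockAt_iff hord (by omega)).1 hζ
    intro k hk
    rw [Pi.add_apply, ih k (by omega), hagr k (by omega), (hord _ (by omega)).2 k hk]

omit hord in
include h0 in
lemma AscLtAt.one_le {ε : ℕ → ℕ} {N i : ℕ} (hN : 1 ≤ N) (h : AscLtAt ε (μ (N + 1)) i) :
    1 ≤ i := by
  by_contra! hi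
  have := h.1
  rw [Nat.lt_one_iff.mp hi, h0 N hN] at this
  omega

lemma AscLtAt.le {ε : ℕ → ℕ} {N i : ℕ} (hN : 1 ≤ N) (h : AscLtAt ε (μ (N + 1)) i) : i ≤ N := by
  by_contra! hi
  have := h.1
  rw [(hord N hN).2 i hi] at this
  omega

lemma AscLtAt.apply_eq_zero_of_lt {ε : ℕ → ℕ} {N i : ℕ} (hN : 1 ≤ N)
    (h : AscLtAt ε (μ (N + 1)) i) : ∀ k, N < k → ε k = 0 := fun k hk => by
  rw [h.2 k (by have := h.le hord hN; omega), (hord N hN).2 k hk]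

lemma exists_ascLtAt_of_apply_eq_zero {ε : ℕ → ℕ} {N : ℕ} (hN : 1 ≤ N)
    (h : ε ∈ DeterminedCollection μ) (hε : ∀ k, N < k → ε k = 0) (hεN : ε N = 0) :
    ∃ i, AscLtAt ε (μ (N + 1)) i ∧ truncBelow i ε ∈ DeterminedCollection μ := by
  refine ⟨N, ⟨by simpa [hεN] using Nat.pos_of_ne_zero (hord N hN).1,
    fun j hj => by rw [hε j hj, (hord N hN).2 j hj]⟩, ?_⟩
  convert h using 1
  ext k
  rcases lt_or_ge k N with hk | hk
  · simp [truncBelow, hk]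
  · rcases hk.lt_or_eq with hk | rfl
    · simp [truncBelow, hk.not_gt, hε k hk]
    · simp [truncBelow, hεN]

lemma BlockSum.eq_or_ascLtAt {ε : ℕ → ℕ} {t N : ℕ} (hN : 1 ≤ N) (h : BlockSum μ ε t)
    (hε : ∀ k, N < k → ε k = 0) :
    ε = μ (N + 1) ∨ ∃ i, AscLtAt ε (μ (N + 1)) i ∧ truncBelow i ε ∈ DeterminedCollection μ := by
  have of_apply_eq_zero : ∀ {ε t}, BlockSum μ ε t → (∀ k, N < k → ε k = 0) → ε N = 0 →
      ∃ i, AscLtAt ε (μ (N + 1)) i ∧ truncBelow i ε ∈ DeterminedCollection μ :=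
    fun h => exists_ascLtAt_of_apply_eq_zero hord hN (mem_determinedCollection_iff.2 ⟨_, h⟩)
  induction h with
  | nil => exact .inr (of_apply_eq_zero .nil hε rfl)
  | @maximal ζ n hmax =>
    obtain ⟨hn, rfl⟩ := hmax
    rcases lt_trichotomy n N with hnN | rfl | hNn
    · exact .inr (of_apply_eq_zero (.maximal ⟨hn, rfl⟩) hε ((hord n hn).2 N hnN))
    · exact .inl rfl
    · exact absurd (hε n hNn) (hord n hn).1
  | @snoc τ ζ n t hτ hζ ih =>
    obtain ⟨hle, ⟨hlt, hagr⟩, hbelow⟩ := (isProperBlockAt_iff hord (by omega)).1 hζ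
    have hτ0 := hτ.apply_eq_zero_of_lt hord
    rcases lt_trichotomy t N with htN | rfl | hNt
    · refine .inr (of_apply_eq_zero (.snoc hτ hζ) hε ?_)
      rw [Pi.add_apply, hτ0 N (by omega), hagr N (by omega), (hord t (by omega)).2 N htN]
    · refine .inr ⟨n + 1, ⟨by simpa [hτ0] using hlt,
        fun j hj => by simp [hτ0 j (by omega), hagr j hj]⟩, ?_⟩
      convert mem_determinedCollection_iff.2 ⟨n, hτ⟩ using 1
      ext k
      by_cases hk : k < n + 1
      · simp [truncBelow, hk, hbelow]
      · simp [truncBelow, hk, hτ0 k (by omega)]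
    · -- a block ending beyond `N` must be a zero block
      have hζt : ζ t = 0 := by have := hε t hNt; simp_all
      have htn : t = n + 1 := by
        by_contra h
        exact (hord t (by omega)).1 (hagr t (by omega) ▸ hζt)
      have hζ0 : ζ = 0 := by
        ext k
        rcases lt_trichotomy k t with hk | rfl | hk
        · exact hbelow k (by omega)
        · exact hζt
        · rw [hagr k (by omega), (hord t (by omega)).2 k hk]; rfl
      subst hζ0
      simpa using ih (by simpa using hε)

include h0 in
lemma blockSum_of_ascLtAt {ε : ℕ → ℕ} {N i : ℕ} (hN : 1 ≤ N) (hi : AscLtAt ε (μ (N + 1)) i)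
    (htr : BlockSum μ (truncBelow i ε) (i - 1)) : BlockSum μ ε N := by
  have h1 := hi.one_le h0 hN
  have hsplit : ε = truncBelow i ε + fun k => if k < i then 0 else ε k := by
    ext k; by_cases hk : k < i <;> simp [truncBelow, hk]
  have hblock : IsProperBlockAt μ (fun k => if k < i then 0 else ε k) i N :=
    (isProperBlockAt_iff hord h1).2 ⟨hi.le hord hN, ⟨by simpa using hi.1,
      fun j hj => by simpa [hj.not_gt] using hi.2 j hj⟩, fun s hs => by simp [hs]⟩
  rw [hsplit]
  exact .snoc htr (by rwa [Nat.sub_add_cancel h1])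

include h0 in
lemma blockSum_of_mem {ε : ℕ → ℕ} {t : ℕ} (h : ε ∈ DeterminedCollection μ)
    (hε : ∀ k, t < k → ε k = 0) : BlockSum μ ε t := by
  induction t using Nat.strong_induction_on generalizing ε with
  | _ t ih =>
  obtain ⟨t', h'⟩ := mem_determinedCollection_iff.1 h
  rcases Nat.eq_zero_or_pos t with rfl | ht
  · convert BlockSum.nil
    ext k
    rcases Nat.eq_zero_or_pos k with rfl | hk
    · exact h'.apply_zero h0
    · exact hε k hk
  rcases h'.eq_or_ascLtAt hord ht hε with rfl | ⟨i, hi, htr⟩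
  · exact .maximal ⟨ht, rfl⟩
  have h1 := hi.one_le h0 ht
  refine blockSum_of_ascLtAt h0 hord ht hi (ih (i - 1) ?_ htr fun k hk => ?_)
  · have := hi.le hord ht; omega
  · simp [truncBelow, show ¬k < i by omega]

include h0 in
lemma mem_collectionBelow_succ_iff {ε : ℕ → ℕ} {N : ℕ} (hN : 1 ≤ N) :
    ε ∈ collectionBelow μ (N + 1) ↔
      ε = μ (N + 1) ∨ ∃ i, AscLtAt ε (μ (N + 1)) i ∧ truncBelow i ε ∈ collectionBelow μ i := by
  constructor
  · rintro ⟨h, hε⟩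
    obtain ⟨t, ht⟩ := mem_determinedCollection_iff.1 h
    refine (ht.eq_or_ascLtAt hord hN fun k hk => hε k hk).imp_right ?_
    rintro ⟨i, hi, htr⟩
    exact ⟨i, hi, htr, fun k hk => by simp [truncBelow, hk.not_gt]⟩
  · rintro (rfl | ⟨i, hi, htr, -⟩)
    · exact ⟨mem_determinedCollection_iff.2 ⟨N, .maximal ⟨hN, rfl⟩⟩, (hord N hN).2⟩
    refine ⟨mem_determinedCollection_iff.2 ⟨N, blockSum_of_ascLtAt h0 hord hN hi ?_⟩,
      fun k hk => hi.apply_eq_zero_of_lt hord hN k hk⟩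
    refine blockSum_of_mem h0 hord htr fun k hk => ?_
    simp [truncBelow, show ¬k < i by omega]

end Collection

lemma Antitone.eq_of_mem_Ico {α : Type*} [Preorder α] {f : ℕ → α} (hf : Antitone f) {m : α}
    {i j : ℕ} (hi : m ∈ Set.Ico (f (i + 1)) (f i)) (hj : m ∈ Set.Ico (f (j + 1)) (f j)) :
    i = j := by
  by_contra hne
  rcases Nat.lt_or_gt_of_ne hne with h | h
  · exact (hj.2.trans_le (hf h)).not_ge hi.1
  · exact (hi.2.trans_le (hf h)).not_ge hj.1

lemma exists_mem_Ico_of_le_of_lt {α : Type*} [LinearOrder α] {f : ℕ → α} {m : α} {a b : ℕ}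
    (hab : a ≤ b) (hb : f b ≤ m) (ha : m < f a) :
    ∃ i, a ≤ i ∧ i < b ∧ m ∈ Set.Ico (f (i + 1)) (f i) := by
  induction b, hab using Nat.le_induction with
  | base => exact absurd hb ha.not_ge
  | succ b hab ih =>
    rcases le_or_gt (f b) m with h | h
    · obtain ⟨i, hai, hib, hm⟩ := ih h
      exact ⟨i, hai, by omega, hm⟩
    · exact ⟨b, hab, by omega, hb, h⟩

lemma eq_and_eq_of_add_mul_eq {q a b c e : ℕ} (ha : a < q) (hb : b < q)
    (h : a + c * q = b + e * q) : a = b ∧ c = e := by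
  have hq : 0 < q := by omega
  obtain ⟨hc, ha'⟩ := (Nat.div_mod_unique (a := a + c * q) (d := c) (c := a) hq).2 ⟨by ring, ha⟩
  obtain ⟨he, hb'⟩ := (Nat.div_mod_unique (a := a + c * q) (d := e) (c := b) hq).2
    ⟨by rw [h]; ring, hb⟩
  exact ⟨ha'.symm.trans hb', hc.symm.trans he⟩

section WeightedSum

variable {Q : ℕ → ℕ}

lemma weightedSum_eq_sum_range {ε : ℕ → ℕ} {n : ℕ} (hε : ∀ k, n ≤ k → ε k = 0) :
    weightedSum Q ε = ∑ k ∈ range n, ε k * Q k :=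
  finsum_eq_sum_of_support_subset _ fun k hk => by
    by_contra h
    simp_all

lemma weightedSum_truncBelow (ε : ℕ → ℕ) (i : ℕ) :
    weightedSum Q (truncBelow i ε) = ∑ k ∈ range i, ε k * Q k := by
  rw [weightedSum_eq_sum_range (n := i) fun k hk => by simp [truncBelow, not_lt.2 hk]]
  exact sum_congr rfl fun k hk => by simp [truncBelow, mem_range.1 hk]

lemma weightedSum_eq_of_ascLtAt {ε d : ℕ → ℕ} {i n : ℕ} (hε : ∀ k, n ≤ k → ε k = 0)
    (hin : i < n) (hi : AscLtAt ε d i) :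
    weightedSum Q ε =
      weightedSum Q (truncBelow i ε) + ε i * Q i + ∑ k ∈ Ico (i + 1) n, d k * Q k := by
  rw [weightedSum_eq_sum_range hε, weightedSum_truncBelow, ← sum_range_add_sum_Ico _ hin.le,
    sum_eq_sum_Ico_succ_bot hin, add_assoc]
  congr 2
  exact sum_congr rfl fun k hk => by rw [hi.2 k (mem_Ico.1 hk).1]

lemma weightedSum_mem_Ico_of_ascLtAt {ε d : ℕ → ℕ} {i n : ℕ} (hε : ∀ k, n ≤ k → ε k = 0)
    (hin : i < n) (hi : AscLtAt ε d i) (htr : weightedSum Q (truncBelow i ε) < Q i) :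
    weightedSum Q ε ∈
      Set.Ico (∑ k ∈ Ico (i + 1) n, d k * Q k) (∑ k ∈ Ico i n, d k * Q k) := by
  rw [weightedSum_eq_of_ascLtAt hε hin hi, sum_eq_sum_Ico_succ_bot hin]
  have : (ε i + 1) * Q i ≤ d i * Q i := Nat.mul_le_mul_right _ hi.1
  constructor <;> nlinarith

end WeightedSum

section Fundamental

variable {Q : ℕ → ℕ} {μ : ℕ → ℕ → ℕ} (hQ1 : Q 1 = 1) (h0 : ∀ n, 1 ≤ n → μ (n + 1) 0 = 0)
  (hord : ∀ n, 1 ≤ n → μ (n + 1) n ≠ 0 ∧ ∀ k, n < k → μ (n + 1) k = 0)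
  (hrec : ∀ n, 1 ≤ n → Q (n + 1) = 1 + weightedSum Q (μ (n + 1)))

include h0 hord in
lemma weightedSum_eq_sum_Ico_one {N : ℕ} (hN : 1 ≤ N) :
    weightedSum Q (μ (N + 1)) = ∑ k ∈ Ico 1 (N + 1), μ (N + 1) k * Q k := by
  rw [weightedSum_eq_sum_range fun k hk => (hord N hN).2 k hk, range_eq_Ico,
    sum_eq_sum_Ico_succ_bot (by omega), h0 N hN, zero_mul, zero_add]

include hQ1 hrec in
lemma Q_pos {n : ℕ} (hn : 1 ≤ n) : 0 < Q n := by
  obtain ⟨n, rfl⟩ := Nat.exists_eq_add_of_le' hn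
  rcases Nat.eq_zero_or_pos n with rfl | hn'
  · simp [hQ1]
  · rw [hrec n hn']; omega

include hQ1 h0 hord hrec in
lemma self_lt_Q_succ (n : ℕ) : n < Q (n + 1) := by
  induction n with
  | zero => simp [hQ1]
  | succ n ih =>
    have hterm : μ (n + 1 + 1) (n + 1) * Q (n + 1) ≤ weightedSum Q (μ (n + 1 + 1)) := by
      rw [weightedSum_eq_sum_Ico_one h0 hord (by omega)]
      exact single_le_sum (f := fun k => μ (n + 1 + 1) k * Q k) (fun _ _ => Nat.zero_le _)
        (by simp)
    have := Nat.le_mul_of_pos_left (Q (n + 1)) (Nat.pos_of_ne_zero (hord (n + 1) (by omega)).1)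
    rw [hrec (n + 1) (by omega)]
    omega

section Step

variable {N : ℕ} (hN : 1 ≤ N)
  (IH : ∀ i, 1 ≤ i → i ≤ N → Set.BijOn (weightedSum Q) (collectionBelow μ i) (Set.Iio (Q i)))

include h0 hord hN IH in
lemma weightedSum_mem_Ico_of_truncBelow_mem {ε : ℕ → ℕ} {i : ℕ} (hi : AscLtAt ε (μ (N + 1)) i)
    (htr : truncBelow i ε ∈ collectionBelow μ i) :
    weightedSum Q ε ∈ Set.Ico (∑ k ∈ Ico (i + 1) (N + 1), μ (N + 1) k * Q k)
      (∑ k ∈ Ico i (N + 1), μ (N + 1) k * Q k) :=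
  weightedSum_mem_Ico_of_ascLtAt (fun k hk => hi.apply_eq_zero_of_lt hord hN k hk)
    (Nat.lt_succ_of_le (hi.le hord hN))
    hi (IH i (hi.one_le h0 hN) (hi.le hord hN) |>.mapsTo htr)

include h0 hord hN IH in
lemma weightedSum_lt_of_truncBelow_mem {ε : ℕ → ℕ} {i : ℕ} (hi : AscLtAt ε (μ (N + 1)) i)
    (htr : truncBelow i ε ∈ collectionBelow μ i) :
    weightedSum Q ε < weightedSum Q (μ (N + 1)) := by
  rw [weightedSum_eq_sum_Ico_one h0 hord hN]
  exact (weightedSum_mem_Ico_of_truncBelow_mem h0 hord hN IH hi htr).2.trans_le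
    (sum_le_sum_of_subset (Ico_subset_Ico_left (hi.one_le h0 hN)))

include h0 hord hrec hN IH in
lemma mapsTo_collectionBelow_succ :
    Set.MapsTo (weightedSum Q) (collectionBelow μ (N + 1)) (Set.Iio (Q (N + 1))) := by
  intro ε hε
  have hle : weightedSum Q ε ≤ weightedSum Q (μ (N + 1)) := by
    rcases (mem_collectionBelow_succ_iff h0 hord hN).1 hε with rfl | ⟨i, hi, htr⟩
    · exact le_rfl
    · exact (weightedSum_lt_of_truncBelow_mem h0 hord hN IH hi htr).le
  simp only [Set.mem_Iio, hrec N hN]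
  omega

include h0 hord hN IH in
lemma injOn_collectionBelow_succ : Set.InjOn (weightedSum Q) (collectionBelow μ (N + 1)) := by
  intro ε hε ε' hε' heq
  rcases (mem_collectionBelow_succ_iff h0 hord hN).1 hε with rfl | ⟨i, hi, htr⟩ <;>
    rcases (mem_collectionBelow_succ_iff h0 hord hN).1 hε' with rfl | ⟨i', hi', htr'⟩
  · rfl
  · exact absurd heq (weightedSum_lt_of_truncBelow_mem h0 hord hN IH hi' htr').ne'
  · exact absurd heq (weightedSum_lt_of_truncBelow_mem h0 hord hN IH hi htr).ne
  have hU : Antitone fun a => ∑ k ∈ Ico a (N + 1), μ (N + 1) k * Q k :=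
    fun a b hab => sum_le_sum_of_subset (Ico_subset_Ico_left hab)
  obtain rfl : i = i' :=
    hU.eq_of_mem_Ico (weightedSum_mem_Ico_of_truncBelow_mem h0 hord hN IH hi htr)
      (heq ▸ weightedSum_mem_Ico_of_truncBelow_mem h0 hord hN IH hi' htr')
  have hiN := hi.le hord hN
  have hvanish := fun (ε : ℕ → ℕ) (hi : AscLtAt ε (μ (N + 1)) i) k (hk : N + 1 ≤ k) =>
    hi.apply_eq_zero_of_lt hord hN k hk
  rw [weightedSum_eq_of_ascLtAt (hvanish ε hi) (by omega) hi,
    weightedSum_eq_of_ascLtAt (hvanish ε' hi') (by omega) hi', add_left_inj] at heq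
  have hbij := IH i (hi.one_le h0 hN) hiN
  obtain ⟨hlow, hεi⟩ := eq_and_eq_of_add_mul_eq (hbij.mapsTo htr) (hbij.mapsTo htr') heq
  have htr_eq := hbij.injOn htr htr' hlow
  ext k
  rcases lt_trichotomy k i with hk | rfl | hk
  · simpa [truncBelow, hk] using congrFun htr_eq k
  · exact hεi
  · rw [hi.2 k hk, hi'.2 k hk]

include hQ1 h0 hord hrec hN IH in
lemma surjOn_collectionBelow_succ :
    Set.SurjOn (weightedSum Q) (collectionBelow μ (N + 1)) (Set.Iio (Q (N + 1))) := by
  intro m hm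
  rw [Set.mem_Iio, hrec N hN, weightedSum_eq_sum_Ico_one h0 hord hN, add_comm,
    Nat.lt_succ_iff] at hm
  rcases hm.lt_or_eq with hm | rfl
  swap
  · exact ⟨μ (N + 1), (mem_collectionBelow_succ_iff h0 hord hN).2 (.inl rfl),
      weightedSum_eq_sum_Ico_one h0 hord hN⟩
  obtain ⟨i, hi1, hiN, hUi, hmi⟩ := exists_mem_Ico_of_le_of_lt
    (f := fun a => ∑ k ∈ Ico a (N + 1), μ (N + 1) k * Q k) (b := N + 1) (by omega) (by simp) hm
  simp only [sum_eq_sum_Ico_succ_bot (show i < N + 1 by omega)] at hUi hmi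
  set S := ∑ k ∈ Ico (i + 1) (N + 1), μ (N + 1) k * Q k with hS
  -- `m - S = c * Q i + r` with `r < Q i`; `r` is represented by the induction hypothesis
  have hQi := Q_pos hQ1 hrec hi1
  obtain ⟨τ, hτ, hτr⟩ := (IH i hi1 (by omega)).surjOn (Nat.mod_lt (m - S) hQi)
  have hc : (m - S) / Q i < μ (N + 1) i := (Nat.div_lt_iff_lt_mul hQi).2 (by omega)
  let ε : ℕ → ℕ := fun k => if k < i then τ k else if k = i then (m - S) / Q i else μ (N + 1) k
  have hi : AscLtAt ε (μ (N + 1)) i :=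
    ⟨by simpa [ε] using hc, fun j hj => by simp [ε, hj.not_gt, hj.ne']⟩
  have htr : truncBelow i ε = τ := by
    ext k
    by_cases hk : k < i
    · simp [truncBelow, ε, hk]
    · simp [truncBelow, hk, hτ.2 k (by omega)]
  refine ⟨ε, (mem_collectionBelow_succ_iff h0 hord hN).2 (.inr ⟨i, hi, htr ▸ hτ⟩), ?_⟩
  rw [weightedSum_eq_of_ascLtAt (n := N + 1) (fun k hk => hi.apply_eq_zero_of_lt hord hN k hk)
    (by omega) hi, htr, hτr, ← hS]
  have := Nat.mod_add_div (m - S) (Q i)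
  simp only [ε, lt_irrefl, if_false, if_true, mul_comm _ (Q i)]
  omega

end Step

omit hord in
include h0 in
lemma collectionBelow_one : collectionBelow μ 1 = {0} := by
  ext ε
  refine ⟨fun ⟨h, hε⟩ => ?_, fun h => ⟨h ▸ mem_determinedCollection_iff.2 ⟨0, .nil⟩, ?_⟩⟩
  · obtain ⟨t, ht⟩ := mem_determinedCollection_iff.1 h
    ext k
    rcases Nat.eq_zero_or_pos k with rfl | hk
    · exact ht.apply_zero h0
    · exact hε k hk
  · simp [Set.mem_singleton_iff.1 h]

include hQ1 h0 hord hrec in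
lemma bijOn_collectionBelow {n : ℕ} (hn : 1 ≤ n) :
    Set.BijOn (weightedSum Q) (collectionBelow μ n) (Set.Iio (Q n)) := by
  induction n using Nat.strong_induction_on with
  | _ n ih =>
  obtain ⟨N, rfl⟩ := Nat.exists_eq_add_of_le' hn
  rcases Nat.eq_zero_or_pos N with rfl | hN
  · rw [collectionBelow_one h0, zero_add, hQ1, Order.Iio_one, Set.bijOn_singleton]
    simp [weightedSum]
  have IH := fun i (h1 : 1 ≤ i) (hi : i ≤ N) => ih i (by omega) h1
  exact ⟨mapsTo_collectionBelow_succ h0 hord hrec hN IH, injOn_collectionBelow_succ h0 hord hN IH,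
    surjOn_collectionBelow_succ hQ1 h0 hord hrec hN IH⟩

include hQ1 h0 hord hrec in
lemma injOn_weightedSum : Set.InjOn (weightedSum Q) (DeterminedCollection μ) := by
  intro ε hε ε' hε' heq
  obtain ⟨t, ht⟩ := mem_determinedCollection_iff.1 hε
  obtain ⟨t', ht'⟩ := mem_determinedCollection_iff.1 hε'
  exact (bijOn_collectionBelow hQ1 h0 hord hrec (n := t + t' + 1) (by omega)).injOn
    ⟨hε, fun k hk => ht.apply_eq_zero_of_lt hord k (by omega)⟩
    ⟨hε', fun k hk => ht'.apply_eq_zero_of_lt hord k (by omega)⟩ heq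

end Fundamental

/-- Zeckendorf's theorem for positive integers: if `Q 1 = 1` and
`Q n = Q 1 + Σ_k (μ n) k * Q k` where `μ n` has order `n - 1` (for `n ≥ 2`),
then `ε ↦ Σ_k ε k * Q k` is injective on the collection `𝓔` determined by the
family `μ` and maps `𝓔 \ {0}` bijectively onto the positive integers; i.e.
`Q` is a fundamental sequence for `ℕ` under the `𝓔`-Zeckendorf condition. -/
theorem fundamental_sequence_for_positive_integers (Q : ℕ → ℕ) (hQ1 : Q 1 = 1)
    (μ : ℕ → ℕ → ℕ) (h0 : ∀ n, 2 ≤ n → μ n 0 = 0)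
    (hord : ∀ n, 2 ≤ n → μ n (n - 1) ≠ 0 ∧ ∀ k, n - 1 < k → μ n k = 0)
    (hrec : ∀ n, 2 ≤ n → Q n = Q 1 + ∑ᶠ k, μ n k * Q k) :
    Set.InjOn (fun ε : ℕ → ℕ => ∑ᶠ k, ε k * Q k) (DeterminedCollection μ) ∧
    Set.BijOn (fun ε : ℕ → ℕ => ∑ᶠ k, ε k * Q k)
      (DeterminedCollection μ \ {0}) {m : ℕ | 0 < m} := by
  have h0' : ∀ n, 1 ≤ n → μ (n + 1) 0 = 0 := fun n hn => h0 (n + 1) (by omega)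
  have hord' : ∀ n, 1 ≤ n → μ (n + 1) n ≠ 0 ∧ ∀ k, n < k → μ (n + 1) k = 0 :=
    fun n hn => by simpa using hord (n + 1) (by omega)
  have hrec' : ∀ n, 1 ≤ n → Q (n + 1) = 1 + weightedSum Q (μ (n + 1)) :=
    fun n hn => by rw [hrec (n + 1) (by omega), hQ1]; rfl
  have hinj : Set.InjOn (weightedSum Q) (DeterminedCollection μ) :=
    injOn_weightedSum hQ1 h0' hord' hrec'
  have hzero : weightedSum Q 0 = 0 := by simp [weightedSum]
  have hzero_mem : (0 : ℕ → ℕ) ∈ DeterminedCollection μ := mem_determinedCollection_iff.2 ⟨0, .nil⟩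
  refine ⟨hinj, fun ε hε => Nat.pos_of_ne_zero fun h =>
    hε.2 (hinj hε.1 hzero_mem (h.trans hzero.symm)), hinj.mono Set.sdiff_subset, fun m hm => ?_⟩
  obtain ⟨ε, hε, rfl⟩ := (bijOn_collectionBelow hQ1 h0' hord' hrec' (n := m + 1) (by omega)).surjOn
    (self_lt_Q_succ hQ1 h0' hord' hrec' m)
  exact ⟨ε, ⟨hε.1, fun h => hm.ne' ((congrArg (weightedSum Q) h).trans hzero)⟩, rfl⟩
end

section
/- Let a > 1 and 0 < j < a be integers with gcd(j,a) = 1, and let 𝓔 be a nontrivial Zeckendorf collection for positive integers, i.e., 𝓔 contains at least one element other than the zero function and the basis functions β^i. Then there is no sequence Q : {1,2,…} → ℕ with the unique 𝓔-representation property such that X_Q = {j + a·m : m = 1, 2, 3, …}. -/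
lemma ascLt_trans {μ ν σ : ℕ → ℕ} (h₁ : AscLt μ ν) (h₂ : AscLt ν σ) : AscLt μ σ := by
  obtain ⟨k, hk, hk'⟩ := h₁
  obtain ⟨l, hl, hl'⟩ := h₂
  rcases lt_trichotomy k l with h | rfl | h
  · exact ⟨l, hk' l h ▸ hl, fun i hi => (hk' i (h.trans hi)).trans (hl' i hi)⟩
  · exact ⟨k, hk.trans hl, fun i hi => (hk' i hi).trans (hl' i hi)⟩
  · exact ⟨k, hk.trans_eq (hl' k h), fun i hi => (hk' i hi).trans (hl' i (h.trans hi))⟩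

lemma ascLt_irrefl (μ : ℕ → ℕ) : ¬ AscLt μ μ := fun ⟨_, hk, _⟩ => lt_irrefl _ hk

lemma zero_ascLt {μ : ℕ → ℕ} (hμ : FinSupp μ) (h0 : μ ≠ 0) : AscLt 0 μ := by
  obtain ⟨k, hk, hmax⟩ :=
    Set.Finite.exists_maximalFor id _ hμ (Function.support_nonempty_iff.mpr h0)
  refine ⟨k, Nat.pos_of_ne_zero hk, fun i hi => ?_⟩
  by_contra hne
  exact hi.not_ge (hmax (Ne.symm hne) hi.le)

noncomputable def ascRank (E : Set (ℕ → ℕ)) (μ : ℕ → ℕ) : ℕ :=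
  {σ | σ ∈ E ∧ AscLt σ μ}.ncard

section FiniteLowerSets

variable {E : Set (ℕ → ℕ)} (hfin : ∀ μ ∈ E, {σ | σ ∈ E ∧ AscLt σ μ}.Finite)
include hfin

lemma ascRank_lt_ascRank {μ ν : ℕ → ℕ} (hμ : μ ∈ E) (hν : ν ∈ E) (h : AscLt μ ν) :
    ascRank E μ < ascRank E ν := by
  refine Set.ncard_lt_ncard ⟨fun σ hσ => ⟨hσ.1, ascLt_trans hσ.2 h⟩, fun hsub => ?_⟩ (hfin ν hν)
  exact ascLt_irrefl μ (hsub ⟨hμ, h⟩).2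

lemma exists_ascLt_minimal {S : Set (ℕ → ℕ)} (hS : S ⊆ E) (hne : S.Nonempty) :
    ∃ μ ∈ S, ∀ σ ∈ S, ¬ AscLt σ μ := by
  obtain ⟨μ, hμ, hmin⟩ := (measure (ascRank E)).wf.has_min S hne
  exact ⟨μ, hμ, fun σ hσ h => hmin σ hσ (ascRank_lt_ascRank hfin (hS hσ) (hS hμ) h)⟩

lemma exists_ascLt_maximal {S : Set (ℕ → ℕ)} (hS : S ⊆ E) (hSfin : S.Finite)
    (hne : S.Nonempty) : ∃ τ ∈ S, ∀ σ ∈ S, ¬ AscLt τ σ := by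
  obtain ⟨τ, hτ, hmax⟩ := Set.exists_max_image S (ascRank E) hSfin hne
  exact ⟨τ, hτ, fun σ hσ h => (hmax σ hσ).not_gt (ascRank_lt_ascRank hfin (hS hτ) (hS hσ) h)⟩

end FiniteLowerSets

lemma IsZeckendorf.exists_pred {E : Set (ℕ → ℕ)} (hE : IsZeckendorf E) {μ : ℕ → ℕ}
    (hμ : μ ∈ E) (h0 : μ ≠ 0) :
    ∃ τ ∈ E, AscLt τ μ ∧ ((μ = fun k => beta 1 k + τ k) ∨
      ∃ n, 2 ≤ n ∧ μ = fun k => beta n k + if n ≤ k then τ k else 0) := by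
  obtain ⟨⟨hsupp, hzero, -⟩, hfin, hsucc⟩ := hE
  obtain ⟨τ, ⟨hτE, hτμ⟩, hτmax⟩ := exists_ascLt_maximal hfin (fun _ h => h.1) (hfin μ hμ)
    ⟨0, hzero, zero_ascLt (hsupp μ hμ).2 h0⟩
  obtain ⟨ν, ⟨hνE, hτν, hνleast⟩, hν⟩ := hsucc τ hτE
  -- `ν <_a μ` would put `ν` strictly between `τ` and `μ`.
  have hνμ : ν = μ := (hνleast μ hμ hτμ).elim Eq.symm fun h => (hτmax ν ⟨hνE, h⟩ hτν).elim
  subst hνμ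
  exact ⟨τ, hτE, hτμ, hν.imp id fun ⟨n, hn, _, _, _, h⟩ => ⟨n, hn, h⟩⟩

def IsZeroOrBeta (μ : ℕ → ℕ) : Prop := μ = 0 ∨ ∃ i, 1 ≤ i ∧ μ = beta i

lemma beta_add_restrict_beta (n i : ℕ) :
    (fun k => beta n k + if n ≤ k then beta i k else 0) =
      if n ≤ i then beta n + beta i else beta n := by
  funext k
  by_cases hk : n ≤ k <;> by_cases hi : n ≤ i <;>
    simp [hk, hi, beta] <;> omega

lemma isZeroOrBeta_or_eq_beta_add_beta_of_succ {τ μ : ℕ → ℕ} (hτ : IsZeroOrBeta τ)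
    (hμ : (μ = fun k => beta 1 k + τ k) ∨
      ∃ n, 2 ≤ n ∧ μ = fun k => beta n k + if n ≤ k then τ k else 0) :
    IsZeroOrBeta μ ∨ ∃ n i, 1 ≤ n ∧ 1 ≤ i ∧ μ = beta n + beta i := by
  rcases hτ with rfl | ⟨i, hi, rfl⟩ <;> rcases hμ with rfl | ⟨n, hn, rfl⟩
  · exact Or.inl (Or.inr ⟨1, le_rfl, by simp⟩)
  · exact Or.inl (Or.inr ⟨n, by omega, by simp⟩)
  · exact Or.inr ⟨1, i, le_rfl, hi, rfl⟩
  · rw [beta_add_restrict_beta]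
    split_ifs
    · exact Or.inr ⟨n, i, by omega, hi, rfl⟩
    · exact Or.inl (Or.inr ⟨n, by omega, rfl⟩)

lemma IsZeckendorf.exists_beta_add_beta_mem {E : Set (ℕ → ℕ)} (hE : IsZeckendorf E)
    (hnontriv : ∃ μ ∈ E, ¬ IsZeroOrBeta μ) : ∃ n i, 1 ≤ n ∧ 1 ≤ i ∧ beta n + beta i ∈ E := by
  obtain ⟨μ, ⟨hμE, hμ⟩, hmin⟩ :=
    exists_ascLt_minimal hE.2.1 (S := {μ | μ ∈ E ∧ ¬ IsZeroOrBeta μ}) (fun _ h => h.1) hnontriv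
  obtain ⟨τ, hτE, hτμ, hsucc⟩ := hE.exists_pred hμE fun h0 => hμ (Or.inl h0)
  have hτ : IsZeroOrBeta τ := by
    by_contra h
    exact hmin τ ⟨hτE, h⟩ hτμ
  rcases isZeroOrBeta_or_eq_beta_add_beta_of_succ hτ hsucc with h | ⟨n, i, hn, hi, rfl⟩
  · exact absurd h hμ
  · exact ⟨n, i, hn, hi, hμE⟩

lemma beta_ne_zero (n : ℕ) : beta n ≠ 0 := fun h => by simpa [beta] using congrFun h n

lemma finsum_beta_mul (Q : ℕ → ℕ) (n : ℕ) : ∑ᶠ k, beta n k * Q k = Q n := by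
  rw [finsum_eq_single _ n fun k hk => by simp [beta, hk]]
  simp [beta]

lemma finsum_beta_add_beta_mul (Q : ℕ → ℕ) (n i : ℕ) :
    ∑ᶠ k, (beta n + beta i) k * Q k = Q n + Q i := by
  have hfin (r : ℕ) : (Function.support fun k => beta r k * Q k).Finite :=
    (Set.finite_singleton r).subset fun k hk => by
      by_contra h
      simp_all [beta]
  simp only [Pi.add_apply, add_mul]
  rw [finsum_add_distrib (hfin n) (hfin i), finsum_beta_mul, finsum_beta_mul]

lemma not_add_modEq_of_modEq {a j x y : ℕ} (hj0 : 0 < j) (hja : j < a)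
    (hx : x ≡ j [MOD a]) (hy : y ≡ j [MOD a]) : ¬ x + y ≡ j [MOD a] := fun hxy => by
  have hj : j + j ≡ 0 + j [MOD a] := (hx.add hy).symm.trans (by simpa using hxy)
  have hdvd : a ∣ j := Nat.modEq_zero_iff_dvd.mp (Nat.ModEq.add_right_cancel' j hj)
  exact hja.not_ge (Nat.le_of_dvd hj0 hdvd)

theorem congruence_class_not_E_subset_general (a j : ℕ) (hj0 : 0 < j)
    (hja : j < a) (E : Set (ℕ → ℕ))
    (hE : IsZeckendorf E)
    (hnontriv : ∃ μ ∈ E, μ ≠ 0 ∧ ∀ i, 1 ≤ i → μ ≠ beta i) :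
    ¬ ∃ Q : ℕ → ℕ,
        Set.InjOn (fun ε : ℕ → ℕ => ∑ᶠ k, ε k * Q k) E ∧
        (fun ε : ℕ → ℕ => ∑ᶠ k, ε k * Q k) '' (E \ {0}) =
          {x : ℕ | ∃ m, 1 ≤ m ∧ x = j + a * m} := by
  rintro ⟨Q, -, himg⟩
  have hval {μ : ℕ → ℕ} (hμ : μ ∈ E) (h0 : μ ≠ 0) : ∑ᶠ k, μ k * Q k ≡ j [MOD a] := by
    obtain ⟨m, -, hm⟩ : ∑ᶠ k, μ k * Q k ∈ {x : ℕ | ∃ m, 1 ≤ m ∧ x = j + a * m} :=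
      himg ▸ ⟨μ, ⟨hμ, h0⟩, rfl⟩
    simp [hm, Nat.ModEq]
  have hQ {n : ℕ} (hn : 1 ≤ n) : Q n ≡ j [MOD a] :=
    finsum_beta_mul Q n ▸ hval (hE.1.2.2 n hn) (beta_ne_zero n)
  obtain ⟨μ, hμE, h0, hμ⟩ := hnontriv
  obtain ⟨n, i, hn, hi, hmem⟩ := hE.exists_beta_add_beta_mem
    ⟨μ, hμE, by rintro (h | ⟨i, hi, h⟩) <;> [exact h0 h; exact hμ i hi h]⟩
  have hsum := hval hmem fun h => by simpa [beta] using congrFun h n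
  rw [finsum_beta_add_beta_mul] at hsum
  exact not_add_modEq_of_modEq hj0 hja (hQ hn) (hQ hi) hsum

/-- For `a > 1`, `0 < j < a` with `gcd j a = 1`, the congruence class
`{j + a m : m ≥ 1}` is not an `𝓔`-subset of `ℕ` for any nontrivial Zeckendorf
collection `𝓔`. -/
theorem congruence_class_not_E_subset (a j : ℕ) (ha : 1 < a) (hj0 : 0 < j)
    (hja : j < a) (hgcd : Nat.gcd j a = 1) (E : Set (ℕ → ℕ))
    (hE : IsZeckendorf E)
    (hnontriv : ∃ μ ∈ E, μ ≠ 0 ∧ ∀ i, 1 ≤ i → μ ≠ beta i) :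
    ¬ ∃ Q : ℕ → ℕ,
        Set.InjOn (fun ε : ℕ → ℕ => ∑ᶠ k, ε k * Q k) E ∧
        (fun ε : ℕ → ℕ => ∑ᶠ k, ε k * Q k) '' (E \ {0}) =
          {x : ℕ | ∃ m, 1 ≤ m ∧ x = j + a * m} :=
  congruence_class_not_E_subset_general a j hj0 hja E hE hnontriv
end

section
/- Let p be a prime and let 𝓔 be any set of functions ε : {1,2,…} → ℕ with ε_k < p for all k, containing the zero function and every basis function β^i. Let Q and Z be sequences in ℤ_p with |Q_k|_p > |Q_{k+1}|_p and |Z_k|_p > |Z_{k+1}|_p for all k ≥ 1, and suppose X_Q = X_Z. Then v_p(Q_k) = v_p(Z_k) for all k ≥ 1. -/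
/-- The `𝓔`-subset of `ℤ_p` generated by a sequence `Q`: the sums
`Σ_{k≥1} ε_k Q_k` over the nonzero coefficient functions `ε ∈ E`. -/
noncomputable def padicSubset (p : ℕ) [Fact p.Prime] (E : Set (ℕ → ℕ))
    (Q : ℕ → ℤ_[p]) : Set ℤ_[p] :=
  {x | ∃ ε ∈ E, (∃ k, 1 ≤ k ∧ ε k ≠ 0) ∧
    x = ∑' k : ℕ, (ε (k + 1) : ℤ_[p]) * Q (k + 1)}

/-!
The coefficients `ε_k < p` are zero or units of `ℤ_p`, and the norms `‖Q_k‖` strictly decrease,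
so in the ultrametric `ℤ_p` every `Σ ε_k Q_k` has the norm of its first nonzero term. As each
`Q_k` lies in `X_Q` itself, the norms of the elements of `X_Q` are exactly the `‖Q_k‖`. Hence
`X_Q = X_Z` makes `k ↦ ‖Q_k‖` and `k ↦ ‖Z_k‖` strictly decreasing enumerations of the same set,
so they coincide, and the norm determines the valuation.
-/

open Filter Topology

theorem IsUltrametricDist.norm_tsum_eq_of_forall_ne_le {E ι : Type*}
    [NormedAddCommGroup E] [IsUltrametricDist E] {f : ι → E} (hf : Summable f) {j : ι}
    {C : ℝ} (hC : 0 ≤ C) (hle : ∀ i ≠ j, ‖f i‖ ≤ C) (hlt : C < ‖f j‖) :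
    ‖∑' i, f i‖ = ‖f j‖ := by
  classical
  have hrest : ‖∑' i, if i = j then 0 else f i‖ < ‖f j‖ := by
    refine lt_of_le_of_lt (norm_tsum_le_of_forall_le_of_nonneg hC fun i => ?_) hlt
    split_ifs with h
    · simpa using hC
    · exact hle i h
  rw [hf.tsum_eq_add_tsum_ite j, norm_add_eq_max_of_norm_ne_norm hrest.ne', max_eq_left hrest.le]

namespace PadicInt
variable {p : ℕ} [Fact p.Prime]

theorem valuation_eq_of_norm_eq {x y : ℤ_[p]} (h : ‖x‖ = ‖y‖) : x.valuation = y.valuation := by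
  rcases eq_or_ne x 0 with rfl | hx
  · rw [norm_zero, eq_comm, norm_eq_zero] at h
    rw [h]
  have hy : y ≠ 0 := by rintro rfl; simp [hx] at h
  have hp : (1 : ℝ) < p := mod_cast (Fact.out : p.Prime).one_lt
  rw [norm_eq_zpow_neg_valuation hx, norm_eq_zpow_neg_valuation hy] at h
  simpa using zpow_right_injective₀ (by positivity) hp.ne' h

theorem valuation_lt_valuation_of_norm_lt {x y : ℤ_[p]} (hx : x ≠ 0) (h : ‖x‖ < ‖y‖) :
    y.valuation < x.valuation := by
  have hy : y ≠ 0 := by rintro rfl; rw [norm_zero] at h; exact (norm_nonneg x).not_gt h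
  have hp : (1 : ℝ) < p := mod_cast (Fact.out : p.Prime).one_lt
  rw [norm_eq_zpow_neg_valuation hx, norm_eq_zpow_neg_valuation hy,
    zpow_lt_zpow_iff_right₀ hp] at h
  omega

theorem tendsto_zero_of_strictAnti_norm {a : ℕ → ℤ_[p]} (ha : StrictAnti (‖a ·‖)) :
    Tendsto a atTop (𝓝 0) := by
  have hne : ∀ n, a n ≠ 0 := fun n =>
    norm_pos_iff.mp ((norm_nonneg _).trans_lt (ha n.lt_succ_self))
  have hv : StrictMono (fun n => (a n).valuation) := fun m n hmn =>
    valuation_lt_valuation_of_norm_lt (hne n) (ha hmn)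
  have hp : (1 : ℝ) < p := mod_cast (Fact.out : p.Prime).one_lt
  refine squeeze_zero_norm
    (fun n => (norm_le_pow_iff_le_valuation _ (hne n) n).mpr (hv.id_le n)) ?_
  simp only [zpow_neg, zpow_natCast, ← inv_pow]
  exact tendsto_pow_atTop_nhds_zero_of_lt_one (by positivity) (inv_lt_one_of_one_lt₀ hp)

theorem norm_natCast_mul_le (n : ℕ) (x : ℤ_[p]) : ‖(n : ℤ_[p]) * x‖ ≤ ‖x‖ := by
  rw [norm_mul]
  exact mul_le_of_le_one_left (norm_nonneg _) (norm_le_one _)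

theorem summable_natCast_mul_of_strictAnti_norm {a : ℕ → ℤ_[p]} (ha : StrictAnti (‖a ·‖))
    (c : ℕ → ℕ) : Summable fun k => (c k : ℤ_[p]) * a k := by
  refine NonarchimedeanAddGroup.summable_of_tendsto_cofinite_zero ?_
  rw [Nat.cofinite_eq_atTop]
  exact squeeze_zero_norm (fun k => norm_natCast_mul_le _ _)
    (tendsto_norm_zero.comp (tendsto_zero_of_strictAnti_norm ha))

theorem norm_tsum_natCast_mul_eq {a : ℕ → ℤ_[p]} (ha : StrictAnti (‖a ·‖)) {c : ℕ → ℕ}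
    (hc : ∀ k, c k < p) {j : ℕ} (hj : c j ≠ 0) (hmin : ∀ k < j, c k = 0) :
    ‖∑' k, (c k : ℤ_[p]) * a k‖ = ‖a j‖ := by
  have hunit : ‖(c j : ℤ_[p])‖ = 1 :=
    norm_natCast_eq_one_iff.mpr (Nat.coprime_of_lt_prime hj (hc j) Fact.out)
  have hlead : ‖(c j : ℤ_[p]) * a j‖ = ‖a j‖ := by rw [norm_mul, hunit, one_mul]
  rw [← hlead]
  refine IsUltrametricDist.norm_tsum_eq_of_forall_ne_le
    (summable_natCast_mul_of_strictAnti_norm ha c) (norm_nonneg (a (j + 1))) (fun k hk => ?_)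
    (hlead ▸ ha j.lt_succ_self)
  rcases hk.lt_or_gt with hkj | hjk
  · simp [hmin k hkj]
  · exact (norm_natCast_mul_le _ _).trans (ha.antitone hjk)

end PadicInt

section padicSubset
variable {p : ℕ} [Fact p.Prime] {E : Set (ℕ → ℕ)}

theorem norm_mem_range_of_mem_padicSubset (hlt : ∀ ε ∈ E, ∀ k, 1 ≤ k → ε k < p)
    {Z : ℕ → ℤ_[p]} (hZ : StrictAnti fun k => ‖Z (k + 1)‖) {x : ℤ_[p]}
    (hx : x ∈ padicSubset p E Z) : ‖x‖ ∈ Set.range fun k => ‖Z (k + 1)‖ := by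
  classical
  obtain ⟨ε, hε, ⟨k, hk, hεk⟩, rfl⟩ := hx
  have hex : ∃ k, ε (k + 1) ≠ 0 := ⟨k - 1, by rwa [Nat.sub_add_cancel hk]⟩
  exact ⟨Nat.find hex, (PadicInt.norm_tsum_natCast_mul_eq hZ
    (fun k => hlt ε hε (k + 1) k.succ_pos) (Nat.find_spec hex)
    fun k hk => not_not.mp (Nat.find_min hex hk)).symm⟩

theorem mem_padicSubset_self (hbeta : ∀ i, 1 ≤ i → beta i ∈ E) (Q : ℕ → ℤ_[p]) (k : ℕ) :
    Q (k + 1) ∈ padicSubset p E Q := by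
  refine ⟨beta (k + 1), hbeta (k + 1) k.succ_pos, ⟨k + 1, k.succ_pos, by simp [beta]⟩, ?_⟩
  rw [tsum_eq_single k fun n hn => by simp [beta, hn]]
  simp [beta]

theorem range_norm_subset_of_padicSubset_subset (hlt : ∀ ε ∈ E, ∀ k, 1 ≤ k → ε k < p)
    (hbeta : ∀ i, 1 ≤ i → beta i ∈ E) {Q Z : ℕ → ℤ_[p]} (hZ : StrictAnti fun k => ‖Z (k + 1)‖)
    (hQZ : padicSubset p E Q ⊆ padicSubset p E Z) :
    (Set.range fun k => ‖Q (k + 1)‖) ⊆ Set.range fun k => ‖Z (k + 1)‖ := by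
  rintro _ ⟨k, rfl⟩
  exact norm_mem_range_of_mem_padicSubset hlt hZ (hQZ (mem_padicSubset_self hbeta Q k))

end padicSubset

theorem padic_equal_valuations_general (p : ℕ) [Fact p.Prime] (E : Set (ℕ → ℕ))
    (hlt : ∀ ε ∈ E, ∀ k, 1 ≤ k → ε k < p)
    (hbeta : ∀ i, 1 ≤ i → beta i ∈ E)
    (Q Z : ℕ → ℤ_[p])
    (hQdec : ∀ k, 1 ≤ k → ‖Q (k + 1)‖ < ‖Q k‖)
    (hZdec : ∀ k, 1 ≤ k → ‖Z (k + 1)‖ < ‖Z k‖)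
    (hX : padicSubset p E Q = padicSubset p E Z) :
    ∀ k, 1 ≤ k → (Q k).valuation = (Z k).valuation := by
  have hQ : StrictAnti fun k => ‖Q (k + 1)‖ :=
    strictAnti_nat_of_succ_lt fun k => hQdec (k + 1) k.succ_pos
  have hZ : StrictAnti fun k => ‖Z (k + 1)‖ :=
    strictAnti_nat_of_succ_lt fun k => hZdec (k + 1) k.succ_pos
  have hrange : (Set.range fun k => ‖Q (k + 1)‖) = Set.range fun k => ‖Z (k + 1)‖ :=
    (range_norm_subset_of_padicSubset_subset hlt hbeta hZ hX.le).antisymm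
      (range_norm_subset_of_padicSubset_subset hlt hbeta hQ hX.ge)
  -- read the strictly antitone sequences as strictly monotone ones into `ℝᵒᵈ`
  have hnorm := Set.range_injOn_strictMono (γ := ℝᵒᵈ) hQ hZ hrange
  intro k hk
  obtain ⟨m, rfl⟩ := Nat.exists_eq_add_of_le' hk
  exact PadicInt.valuation_eq_of_norm_eq (congrFun hnorm m)

/-- If two decreasing sequences in `ℤ_p` generate the same `𝓔`-subset, for a
collection `𝓔` of coefficient functions with values `< p` containing the zero
function and all basis functions, then the `p`-adic valuations of their terms
agree. -/
theorem padic_equal_valuations (p : ℕ) [Fact p.Prime] (E : Set (ℕ → ℕ))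
    (hlt : ∀ ε ∈ E, ∀ k, 1 ≤ k → ε k < p)
    (hzero : (0 : ℕ → ℕ) ∈ E) (hbeta : ∀ i, 1 ≤ i → beta i ∈ E)
    (Q Z : ℕ → ℤ_[p])
    (hQdec : ∀ k, 1 ≤ k → ‖Q (k + 1)‖ < ‖Q k‖)
    (hZdec : ∀ k, 1 ≤ k → ‖Z (k + 1)‖ < ‖Z k‖)
    (hX : padicSubset p E Q = padicSubset p E Z) :
    ∀ k, 1 ≤ k → (Q k).valuation = (Z k).valuation :=
  padic_equal_valuations_general p E hlt hbeta Q Z hQdec hZdec hX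
end
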